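/- arXiv:2602.07556 — 6 statements merged into one kernel-verified Lean document; each statement's English description precedes it below -/
import Mathlib

section
/- Let Q be a finite abelian group of odd order and let t be an automorphism of Q with t∘t = id and t ≠ id. Then there exists an element q ∈ Q with q ≠ 1 and t(q) = q⁻¹. -/
theorem map_div_map_eq_inv_of_map_map {G F : Type*} [CommGroup G] [FunLike F G G]
    [MonoidHomClass F G G] (t : F) {x : G} (hx : t (t x) = x) :
    t (x / t x) = (x / t x)⁻¹ := by
  rw [map_div, hx, inv_div]

theorem stmt_3_general {Q : Type*} [CommGroup Q]
    (t : Q ≃* Q) (ht2 : ∀ q : Q, t (t q) = q) (htne : t ≠ MulEquiv.refl Q) :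
    ∃ q : Q, q ≠ 1 ∧ t q = q⁻¹ := by
  obtain ⟨x, hx⟩ : ∃ x, t x ≠ x := by
    by_contra! h
    exact htne (MulEquiv.ext h)
  exact ⟨x / t x, div_ne_one.mpr hx.symm, map_div_map_eq_inv_of_map_map t (ht2 x)⟩

/-- A nontrivial automorphism of order dividing 2 of a finite abelian group of odd order
inverts some nontrivial element. -/
theorem stmt_3 {Q : Type*} [CommGroup Q] [Finite Q] (hodd : Odd (Nat.card Q))
    (t : Q ≃* Q) (ht2 : ∀ q : Q, t (t q) = q) (htne : t ≠ MulEquiv.refl Q) :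
    ∃ q : Q, q ≠ 1 ∧ t q = q⁻¹ :=
  stmt_3_general t ht2 htne
end

section
/- Let Ĝ be a finite group, p an odd prime, and Q a normal elementary abelian p-subgroup of Ĝ. Let D be a conjugacy class of involutions of Ĝ such that the product of any two elements of D has order at most 6. If some element of D does not centralize Q, then p = 3 or p = 5. -/
/-! For `d ∈ D` and `q ∈ Q`, the conjugate `d' = q d q⁻¹` lies in `D`, and `d d'` is the
commutator `[d, q]`, which lies in the normal subgroup `Q` and is nontrivial when `d` and `q` do
not commute. Hence `p`, the order of `d d'`, is at most `6`, and an odd `p ≠ 1` below `6` is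
`3` or `5`. -/

section Involution

attribute [local instance] commutatorElement

variable {G : Type*} [Group G] {d : G}

theorem mul_conj_eq_commutatorElement_of_mul_self (hd : d * d = 1) (q : G) :
    d * (q * d * q⁻¹) = ⁅d, q⁆ := by
  rw [commutatorElement_def, inv_eq_of_mul_eq_one_right hd]
  group

theorem Subgroup.Normal.mul_conj_mem_of_mul_self {N : Subgroup G} (hN : N.Normal)
    (hd : d * d = 1) {q : G} (hq : q ∈ N) : d * (q * d * q⁻¹) ∈ N := by
  rw [mul_conj_eq_commutatorElement_of_mul_self hd]
  exact mul_mem (hN.conj_mem q hq d) (inv_mem hq)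

theorem mul_conj_ne_one_of_mul_self {q : G} (hd : d * d = 1) (hdq : d * q ≠ q * d) :
    d * (q * d * q⁻¹) ≠ 1 := by
  rwa [mul_conj_eq_commutatorElement_of_mul_self hd, Ne, commutatorElement_eq_one_iff_mul_comm]

end Involution

theorem stmt_4_general {G : Type*} [Group G] (p : ℕ) (hpodd : Odd p)
    (Q : Subgroup G) (hQn : Q.Normal)
    (hQelem : ∀ q ∈ Q, q ≠ 1 → orderOf q = p)
    (D : Set G) (hDcc : ∃ g : G, D = {x : G | IsConj g x})
    (hDinv : ∀ d ∈ D, orderOf d = 2)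
    (h6 : ∀ d₁ ∈ D, ∀ d₂ ∈ D, orderOf (d₁ * d₂) ≤ 6)
    (hnc : ∃ d ∈ D, ∃ q ∈ Q, d * q ≠ q * d) :
    p = 3 ∨ p = 5 := by
  obtain ⟨d, hdD, q, hqQ, hdq⟩ := hnc
  have hd : d * d = 1 := by simpa [sq, hDinv d hdD] using pow_orderOf_eq_one d
  have hconjD : q * d * q⁻¹ ∈ D := by
    obtain ⟨g, rfl⟩ := hDcc
    exact hdD.trans (isConj_iff.mpr ⟨q, rfl⟩)
  have hne := mul_conj_ne_one_of_mul_self hd hdq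
  have horder := hQelem _ (hQn.mul_conj_mem_of_mul_self hd hqQ) hne
  have hp1 : p ≠ 1 := horder ▸ orderOf_eq_one_iff.not.mpr hne
  have hp6 : p ≤ 6 := horder ▸ h6 d hdD _ hconjD
  obtain ⟨k, rfl⟩ := hpodd
  omega

/-- If `Q` is a normal elementary abelian `p`-subgroup (`p` an odd prime) of a finite group,
`D` is a conjugacy class of involutions forming 6-transpositions, and some element of `D`
does not centralize `Q`, then `p = 3` or `p = 5`. -/
theorem stmt_4 {G : Type*} [Group G] [Finite G] (p : ℕ) (hp : p.Prime) (hpodd : Odd p)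
    (Q : Subgroup G) (hQn : Q.Normal)
    (hQab : ∀ a b : Q, a * b = b * a)
    (hQelem : ∀ q ∈ Q, q ≠ 1 → orderOf q = p)
    (D : Set G) (hDcc : ∃ g : G, D = {x : G | IsConj g x})
    (hDinv : ∀ d ∈ D, orderOf d = 2)
    (h6 : ∀ d₁ ∈ D, ∀ d₂ ∈ D, orderOf (d₁ * d₂) ≤ 6)
    (hnc : ∃ d ∈ D, ∃ q ∈ Q, d * q ≠ q * d) :
    p = 3 ∨ p = 5 :=
  stmt_4_general p hpodd Q hQn hQelem D hDcc hDinv h6 hnc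
end

section
/- Let F be a field of characteristic different from 2, V a nonzero finite-dimensional F-vector space, G a group acting linearly on V via a representation ρ, and E ≤ G a subgroup isomorphic to the Klein four-group C₂ × C₂. Assume that (i) no nonzero vector of V is fixed by every element of E, and (ii) the three nontrivial elements of E are pairwise conjugate in G. Then dim V = 3k for some natural number k, and for each nontrivial e ∈ E the eigenspace of ρ(e) for eigenvalue 1 has dimension k while the eigenspace for eigenvalue −1 has dimension 2k. -/
/-! For nontrivial `e ∈ E` the map `ρ e` is an involution, so `V` is the direct sum of its
`±1`-eigenspaces, and conjugacy makes the dimension `k` of the `1`-eigenspace independent of `e`.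
For distinct nontrivial `a, b ∈ E`, a vector `v` fixed by `a` is negated by `b`, since `v + b v`
is fixed by all of `E`. Hence the `(-1)`-eigenspaces of `a` and `b` span `V` and meet in the
`1`-eigenspace of `ab`, so `dim V + k = 2 (dim V - k)`. -/

open Module Module.End

namespace Module.End

lemma map_eigenspace_of_comp_eq {R M : Type*} [CommRing R] [AddCommGroup M] [Module R M]
    {f f' : End R M} (u : M ≃ₗ[R] M) (h : u.toLinearMap ∘ₗ f = f' ∘ₗ u.toLinearMap) (μ : R) :
    (eigenspace f μ).map u.toLinearMap = eigenspace f' μ := by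
  ext x
  have hx : u (f (u.symm x)) = f' x := by simpa using congr($h (u.symm x))
  rw [Submodule.mem_map_equiv, mem_eigenspace_iff, mem_eigenspace_iff, ← hx,
    ← u.injective.eq_iff, map_smul, u.apply_symm_apply]

section Field

variable {F V : Type*} [Field F] [AddCommGroup V] [Module F V] {f g : End F V}

lemma isCompl_eigenspace_one_eigenspace_neg_one (hchar : (2 : F) ≠ 0) (hf : f * f = 1) :
    IsCompl (eigenspace f 1) (eigenspace f (-1)) := by
  have hf' (v : V) : f (f v) = v := by simpa using congr($hf v)
  refine ⟨f.disjoint_genEigenspace (fun h ↦ hchar (by linear_combination h)) 1 1, ?_⟩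
  rw [codisjoint_iff, eq_top_iff]
  intro v _
  refine Submodule.mem_sup.mpr ⟨(2⁻¹ : F) • (v + f v), ?_, (2⁻¹ : F) • (v - f v), ?_, ?_⟩
  · rw [mem_eigenspace_iff, map_smul, map_add, hf', add_comm, one_smul]
  · rw [mem_eigenspace_iff, map_smul, map_sub, hf', neg_one_smul, ← smul_neg, neg_sub]
  · rw [← smul_add, add_add_sub_cancel, ← two_smul F, smul_smul, inv_mul_cancel₀ hchar, one_smul]

lemma finrank_eigenspace_one_add_finrank_eigenspace_neg_one [FiniteDimensional F V]
    (hchar : (2 : F) ≠ 0) (hf : f * f = 1) :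
    finrank F (eigenspace f 1) + finrank F (eigenspace f (-1)) = finrank F V :=
  Submodule.finrank_add_eq_of_isCompl (isCompl_eigenspace_one_eigenspace_neg_one hchar hf)

lemma eigenspace_one_le_eigenspace_neg_one_of_commute (hg : g * g = 1) (hfg : Commute f g)
    (hfix : Disjoint (eigenspace f 1) (eigenspace g 1)) :
    eigenspace f 1 ≤ eigenspace g (-1) := by
  intro v hv
  rw [mem_eigenspace_iff, one_smul] at hv
  have hg' : g (g v) = v := by simpa using congr($hg v)
  have hw : v + g v = 0 := by
    refine Submodule.disjoint_def.mp hfix _ ?_ ?_ <;> rw [mem_eigenspace_iff, one_smul]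
    · rw [map_add, ← Module.End.mul_apply, hfg.eq, Module.End.mul_apply, hv]
    · rw [map_add, hg', add_comm]
  rw [mem_eigenspace_iff, neg_one_smul, eq_neg_iff_add_eq_zero, add_comm, hw]

lemma eigenspace_mul_one_of_commute (hf : f * f = 1) (hg : g * g = 1) (hfg : Commute f g)
    (hfix : Disjoint (eigenspace f 1) (eigenspace g 1)) :
    eigenspace (f * g) 1 = eigenspace f (-1) ⊓ eigenspace g (-1) := by
  apply le_antisymm
  · have hfix_f : Disjoint (eigenspace (f * g) 1) (eigenspace f 1) := by
      refine Submodule.disjoint_def.mpr fun v hv hvf ↦ Submodule.disjoint_def.mp hfix v hvf ?_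
      rw [mem_eigenspace_iff, one_smul] at hv hvf ⊢
      calc g v = f ((f * g) v) := by rw [← Module.End.mul_apply, ← mul_assoc, hf, one_mul]
        _ = v := by rw [hv, hvf]
    have hfix_g : Disjoint (eigenspace (f * g) 1) (eigenspace g 1) := by
      refine Submodule.disjoint_def.mpr fun v hv hvg ↦ Submodule.disjoint_def.mp hfix v ?_ hvg
      rw [mem_eigenspace_iff, one_smul] at hv hvg ⊢
      calc f v = (f * g) v := by rw [Module.End.mul_apply, hvg]
        _ = v := hv
    exact le_inf (eigenspace_one_le_eigenspace_neg_one_of_commute hf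
        ((Commute.refl f).mul_left hfg.symm) hfix_f)
      (eigenspace_one_le_eigenspace_neg_one_of_commute hg (hfg.mul_left (Commute.refl g)) hfix_g)
  · rintro v ⟨hvf, hvg⟩
    rw [SetLike.mem_coe, mem_eigenspace_iff] at hvf hvg
    rw [mem_eigenspace_iff, Module.End.mul_apply, hvg, map_smul, hvf, smul_smul]
    norm_num

lemma sup_eigenspace_neg_one_eq_top_of_commute (hchar : (2 : F) ≠ 0) (hf : f * f = 1)
    (hg : g * g = 1) (hfg : Commute f g) (hfix : Disjoint (eigenspace f 1) (eigenspace g 1)) :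
    eigenspace f (-1) ⊔ eigenspace g (-1) = ⊤ := by
  refine top_unique ?_
  rw [← (isCompl_eigenspace_one_eigenspace_neg_one hchar hf).sup_eq_top, sup_comm]
  exact sup_le_sup_left (eigenspace_one_le_eigenspace_neg_one_of_commute hg hfg hfix) _

lemma finrank_add_finrank_eigenspace_mul_one_of_commute [FiniteDimensional F V]
    (hchar : (2 : F) ≠ 0) (hf : f * f = 1) (hg : g * g = 1) (hfg : Commute f g)
    (hfix : Disjoint (eigenspace f 1) (eigenspace g 1)) :
    finrank F V + finrank F (eigenspace (f * g) 1) =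
      finrank F (eigenspace f (-1)) + finrank F (eigenspace g (-1)) := by
  rw [← finrank_top F V, ← sup_eigenspace_neg_one_eq_top_of_commute hchar hf hg hfg hfix,
    eigenspace_mul_one_of_commute hf hg hfg hfix, Submodule.finrank_sup_add_finrank_inf_eq]

end Field

end Module.End

namespace IsKleinFour

variable {G : Type*} [Group G] [IsKleinFour G]

lemma exists_ne_one_ne_one_ne : ∃ x y : G, x ≠ 1 ∧ y ≠ 1 ∧ x ≠ y := by
  classical
  have := instFinite (G := G)
  let _ := Fintype.ofFinite G
  obtain ⟨x, -, hx⟩ := Finset.exists_mem_notMem_of_card_lt_card (s := {(1 : G)}) (t := .univ)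
    (by simp)
  obtain ⟨y, -, hy⟩ := Finset.exists_mem_notMem_of_card_lt_card (s := {1, x}) (t := .univ)
    (by rw [Finset.card_univ, card_four']; exact Finset.card_le_two.trans_lt (by norm_num))
  simp only [Finset.mem_singleton, Finset.mem_insert, not_or] at hx hy
  exact ⟨x, y, hx, hy.1, Ne.symm hy.2⟩

lemma eq_one_or_eq_or_eq_or_eq_mul {x y : G} (hx : x ≠ 1) (hy : y ≠ 1) (hxy : x ≠ y) (z : G) :
    z = 1 ∨ z = x ∨ z = y ∨ z = x * y := by
  by_contra! h
  exact h.2.2.2 (eq_mul_of_ne_all hx hy hxy h.1 h.2.1 h.2.2.1)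

end IsKleinFour

namespace Representation

variable {F G V : Type*} [Field F] [Group G] [AddCommGroup V] [Module F V]
  (ρ : Representation F G V)

lemma finrank_eigenspace_eq_of_isConj {e e' : G} (h : IsConj e e') (μ : F) :
    finrank F (eigenspace (ρ e) μ) = finrank F (eigenspace (ρ e') μ) := by
  obtain ⟨g, rfl⟩ := isConj_iff.mp h
  let u : V ≃ₗ[F] V := .ofBijective (ρ g) (ρ.apply_bijective g)
  have hu : u.toLinearMap ∘ₗ ρ e = ρ (g * e * g⁻¹) ∘ₗ u.toLinearMap := by
    ext v
    simp only [u, LinearMap.comp_apply, LinearEquiv.coe_coe, LinearEquiv.ofBijective_apply]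
    rw [← Module.End.mul_apply, ← map_mul, ← Module.End.mul_apply, ← map_mul,
      inv_mul_cancel_right]
  rw [← Module.End.map_eigenspace_of_comp_eq u hu, u.finrank_map_eq]

lemma disjoint_eigenspace_one_of_isKleinFour {E : Subgroup G} [IsKleinFour E]
    (hfix : ∀ v : V, (∀ e ∈ E, ρ e v = v) → v = 0) {a b : E} (ha : a ≠ 1) (hb : b ≠ 1)
    (hab : a ≠ b) : Disjoint (eigenspace (ρ a) 1) (eigenspace (ρ b) 1) := by
  refine Submodule.disjoint_def.mpr fun v hva hvb ↦ hfix v fun e he ↦ ?_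
  rw [mem_eigenspace_iff, one_smul] at hva hvb
  obtain ⟨x, rfl⟩ : ∃ x : E, ↑x = e := ⟨⟨e, he⟩, rfl⟩
  rcases IsKleinFour.eq_one_or_eq_or_eq_or_eq_mul ha hb hab x with rfl | rfl | rfl | rfl <;>
    simp [hva, hvb]

end Representation

theorem stmt_5_general {F V : Type*} [Field F] [AddCommGroup V] [Module F V]
    [FiniteDimensional F V] (hchar : (2 : F) ≠ 0)
    {G : Type*} [Group G] (ρ : Representation F G V)
    (E : Subgroup G) (hE : IsKleinFour E)
    (hfix : ∀ v : V, (∀ e ∈ E, ρ e v = v) → v = 0)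
    (hconj : ∀ e₁ ∈ E, ∀ e₂ ∈ E, e₁ ≠ (1 : G) → e₂ ≠ (1 : G) → IsConj e₁ e₂) :
    ∃ k : ℕ, Module.finrank F V = 3 * k ∧
      ∀ e ∈ E, e ≠ (1 : G) →
        Module.finrank F (Module.End.eigenspace (ρ e) 1) = k ∧
        Module.finrank F (Module.End.eigenspace (ρ e) (-1)) = 2 * k := by
  obtain ⟨a, b, ha, hb, hab⟩ := IsKleinFour.exists_ne_one_ne_one_ne (G := E)
  have hinv (x : E) : ρ x * ρ x = 1 := by
    rw [← map_mul, ← Subgroup.coe_mul, IsKleinFour.mul_self, Subgroup.coe_one, map_one]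
  have hdim (x : G) (hxE : x ∈ E) (hx : x ≠ 1) :
      finrank F (eigenspace (ρ x) 1) = finrank F (eigenspace (ρ a) 1) ∧
      finrank F (eigenspace (ρ x) 1) + finrank F (eigenspace (ρ x) (-1)) = finrank F V :=
    ⟨ρ.finrank_eigenspace_eq_of_isConj (hconj x hxE a a.2 hx (by simpa)) 1,
      finrank_eigenspace_one_add_finrank_eigenspace_neg_one hchar (hinv ⟨x, hxE⟩)⟩
  have hcomm : Commute (ρ a) (ρ b) :=
    ((show Commute a b from mul_comm_of_exponent_two IsKleinFour.exponent_two a b).map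
      E.subtype).map ρ
  have hsum := finrank_add_finrank_eigenspace_mul_one_of_commute hchar (hinv a) (hinv b) hcomm
    (ρ.disjoint_eigenspace_one_of_isKleinFour hfix ha hb hab)
  rw [← map_mul, ← Subgroup.coe_mul] at hsum
  have hc : a * b ≠ 1 := by rwa [Ne, mul_eq_one_iff_eq_inv, IsKleinFour.inv_eq_self]
  obtain ⟨-, hna⟩ := hdim a a.2 (by exact_mod_cast ha)
  obtain ⟨hkb, hnb⟩ := hdim b b.2 (by exact_mod_cast hb)
  obtain ⟨hkc, hnc⟩ := hdim (a * b : E) (a * b).2 (by exact_mod_cast hc)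
  have hn : finrank F V = 3 * finrank F (eigenspace (ρ a) 1) := by omega
  refine ⟨_, hn, fun e he he1 ↦ ?_⟩
  obtain ⟨hke, hne⟩ := hdim e he he1
  exact ⟨hke, by omega⟩

/-- If a Klein four subgroup `E ≤ G` acts on a nonzero finite-dimensional vector space
(over a field of characteristic ≠ 2) with no nonzero fixed vectors and its three
involutions pairwise conjugate in `G`, then `dim V = 3k` and each nontrivial `e ∈ E`
has 1-eigenspace of dimension `k` and (−1)-eigenspace of dimension `2k`. -/
theorem stmt_5 {F V : Type*} [Field F] [AddCommGroup V] [Module F V]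
    [FiniteDimensional F V] [Nontrivial V] (hchar : (2 : F) ≠ 0)
    {G : Type*} [Group G] (ρ : Representation F G V)
    (E : Subgroup G) (hE : IsKleinFour E)
    (hfix : ∀ v : V, (∀ e ∈ E, ρ e v = v) → v = 0)
    (hconj : ∀ e₁ ∈ E, ∀ e₂ ∈ E, e₁ ≠ (1 : G) → e₂ ≠ (1 : G) → IsConj e₁ e₂) :
    ∃ k : ℕ, Module.finrank F V = 3 * k ∧
      ∀ e ∈ E, e ≠ (1 : G) →
        Module.finrank F (Module.End.eigenspace (ρ e) 1) = k ∧
        Module.finrank F (Module.End.eigenspace (ρ e) (-1)) = 2 * k :=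
  stmt_5_general hchar ρ E hE hfix hconj
end

section
/- Let V and G be finite groups with |V| odd, let φ : G → Aut(V) be an action of G on V, and form the semidirect product H = V ⋊_φ G. If any two elements of order 2 in G are conjugate in G, then any two elements of order 2 in H are conjugate in H. -/
/-!
An involution `h = (v, g)` of `V ⋊ G` satisfies `g² = 1` and `φ g v = v⁻¹`. Since squaring is a
bijection of the odd-order group `V`, `v = t²` with `φ g t = t⁻¹`, and then conjugating `inr g`
by `inl t` gives `(t · φ g t⁻¹, g) = (t², g) = h`. So every involution of `H` is conjugate to an
involution of `G`, and conjugacy in `G` is carried into `H` by `inr`.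
-/

open SemidirectProduct

theorem exists_sq_eq_and_map_eq_inv_of_odd_card {V : Type*} [Group V] (hV : Odd (Nat.card V))
    (σ : V →* V) {v : V} (hv : σ v = v⁻¹) : ∃ t, t ^ 2 = v ∧ σ t = t⁻¹ := by
  have hsq := hV.coprime_two_right.pow_left_bijective
  obtain ⟨t, rfl⟩ := hsq.surjective v
  refine ⟨t, rfl, hsq.injective ?_⟩
  simp only [← map_pow, hv, inv_pow]

namespace SemidirectProduct

variable {V G : Type*} [Group V] [Group G] {φ : G →* MulAut V}

theorem isConj_inr_right_of_sq_eq_one (hV : Odd (Nat.card V)) {h : V ⋊[φ] G}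
    (hh : h ^ 2 = 1) : IsConj (inr h.right) h := by
  have hv : φ h.right h.left = h.left⁻¹ :=
    eq_inv_of_mul_eq_one_right (by simpa [sq] using congrArg left hh)
  obtain ⟨t, ht_sq, ht⟩ :=
    exists_sq_eq_and_map_eq_inv_of_odd_card hV (φ h.right).toMonoidHom hv
  refine isConj_iff.mpr ⟨inl t, ?_⟩
  ext <;> simp_all [sq]

theorem orderOf_right_eq_two (hV : Odd (Nat.card V)) {h : V ⋊[φ] G}
    (hh : orderOf h = 2) : orderOf h.right = 2 := by
  obtain ⟨c, hc⟩ := isConj_iff.mp <| isConj_inr_right_of_sq_eq_one hV (hh ▸ pow_orderOf_eq_one h)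
  calc orderOf h.right = orderOf (MulAut.conj c (inr h.right)) := by
        rw [MulEquiv.orderOf_eq, orderOf_injective inr inr_injective]
    _ = 2 := by rw [MulAut.conj_apply, hc, hh]

end SemidirectProduct

theorem stmt_6_general {V G : Type*} [Group V] [Group G]
    (hV : Odd (Nat.card V)) (φ : G →* MulAut V)
    (hG : ∀ g₁ g₂ : G, orderOf g₁ = 2 → orderOf g₂ = 2 → IsConj g₁ g₂) :
    ∀ h₁ h₂ : V ⋊[φ] G, orderOf h₁ = 2 → orderOf h₂ = 2 → IsConj h₁ h₂ := by
  intro h₁ h₂ o₁ o₂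
  have hconj {h : V ⋊[φ] G} (hh : orderOf h = 2) : IsConj (inr h.right) h :=
    isConj_inr_right_of_sq_eq_one hV (hh ▸ pow_orderOf_eq_one h)
  have hright : IsConj h₁.right h₂.right :=
    hG _ _ (orderOf_right_eq_two hV o₁) (orderOf_right_eq_two hV o₂)
  exact (hconj o₁).symm.trans ((inr.map_isConj hright).trans (hconj o₂))

/-- Let `V`, `G` be finite groups with `|V|` odd and `H = V ⋊[φ] G`. If any two elements
of order 2 in `G` are conjugate in `G`, then any two elements of order 2 in `H` are
conjugate in `H`. -/
theorem stmt_6 {V G : Type*} [Group V] [Group G] [Finite V] [Finite G]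
    (hV : Odd (Nat.card V)) (φ : G →* MulAut V)
    (hG : ∀ g₁ g₂ : G, orderOf g₁ = 2 → orderOf g₂ = 2 → IsConj g₁ g₂) :
    ∀ h₁ h₂ : V ⋊[φ] G, orderOf h₁ = 2 → orderOf h₂ = 2 → IsConj h₁ h₂ :=
  stmt_6_general hV φ hG
end

section
/- Let Ĝ be a finite group, S ≤ Ĝ a subgroup isomorphic to the dihedral group of order 8, and E ≤ S a subgroup isomorphic to the Klein four-group C₂ × C₂. Assume that (i) no involution of E is conjugate in Ĝ to any involution of S lying outside E, and (ii) the normalizer of S inside the normalizer N_Ĝ(E) of E equals S. Then S is a Sylow 2-subgroup of Ĝ. -/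
/-!
A self-normalizing `p`-subgroup `H` of a finite group is Sylow: a Sylow subgroup `P ≥ H` is
nilpotent, so if `H < P` then `H` is properly contained in its normalizer in `P`. It therefore
suffices that `N(S) ≤ N(E)`. If `g` normalizes `S` but not `E`, then `g` conjugates some
involution of `E` to an involution of `S` outside `E`, which hypothesis (i) forbids.
-/

open Subgroup

theorem IsPGroup.exists_sylow_eq_of_normalizer_eq {G : Type*} [Group G] [Finite G] {p : ℕ}
    [Fact p.Prime] {H : Subgroup G} (hH : IsPGroup p H) (hN : normalizer (H : Set G) = H) :
    ∃ P : Sylow p G, (P : Subgroup G) = H := by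
  obtain ⟨P, hHP⟩ := hH.exists_le_sylow
  have : Group.IsNilpotent (P : Subgroup G) := P.isPGroup'.isNilpotent
  have hself : normalizer (H.subgroupOf P : Set P) = H.subgroupOf P := by
    rw [← subgroupOf_normalizer_eq hHP, hN]
  have htop := (normalizerCondition_iff_only_full_group_self_normalizing.mp
    Group.normalizerCondition_of_isNilpotent) _ hself
  exact ⟨P, le_antisymm (subgroupOf_eq_top.mp htop) hHP⟩

theorem Subgroup.exists_conj_mem_of_notMem_normalizer {G : Type*} [Group G] {E S : Subgroup G}
    [Finite E] (hES : E ≤ S) {g : G} (hgS : g ∈ normalizer (S : Set G))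
    (hgE : g ∉ normalizer (E : Set G)) : ∃ e ∈ E, g * e * g⁻¹ ∈ S ∧ g * e * g⁻¹ ∉ E := by
  by_contra! h
  exact hgE <| mem_normalizer_fintype fun e he ↦
    h e he ((mem_normalizer_iff.mp hgS e).mp (hES he))

theorem Subgroup.normalizer_le_normalizer_of_forall_not_isConj {G : Type*} [Group G]
    {E S : Subgroup G} [Finite E] (hES : E ≤ S) (hE : Monoid.exponent E = 2)
    (hconj : ∀ e ∈ E, orderOf e = 2 → ∀ s ∈ S, s ∉ E → orderOf s = 2 → ¬ IsConj e s) :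
    normalizer (S : Set G) ≤ normalizer (E : Set G) := by
  intro g hgS
  by_contra hgE
  obtain ⟨e, he, hconjS, hconjE⟩ := exists_conj_mem_of_notMem_normalizer hES hgS hgE
  have he1 : e ≠ 1 := by rintro rfl; simp at hconjE
  have he2 : e ^ 2 = 1 := by
    simpa [hE] using congrArg Subtype.val (Monoid.pow_exponent_eq_one (⟨e, he⟩ : E))
  have horder : orderOf e = 2 := orderOf_eq_prime he2 he1
  have hsemiconj : SemiconjBy g e (g * e * g⁻¹) := by simp [SemiconjBy, mul_assoc]
  exact hconj e he horder _ hconjS hconjE (hsemiconj.orderOf_eq ▸ horder)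
    (isConj_iff.mpr ⟨g, rfl⟩)

/-- Let `S ≤ Ĝ` be dihedral of order 8 and `E ≤ S` a Klein four subgroup. If no involution
of `E` is conjugate in `Ĝ` to an involution of `S` outside `E`, and the normalizer of `S`
inside the normalizer of `E` equals `S`, then `S` is a Sylow 2-subgroup of `Ĝ`. -/
theorem stmt_9 {G : Type*} [Group G] [Finite G] (S E : Subgroup G)
    (hS : Nonempty (S ≃* DihedralGroup 4)) (hE : IsKleinFour E) (hES : E ≤ S)
    (h1 : ∀ e ∈ E, orderOf e = 2 → ∀ s ∈ S, s ∉ E → orderOf s = 2 → ¬ IsConj e s)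
    (h2 : Subgroup.normalizer (S : Set G) ⊓ Subgroup.normalizer (E : Set G) = S) :
    ∃ P : Sylow 2 G, (P : Subgroup G) = S := by
  obtain ⟨φ⟩ := hS
  have hpS : IsPGroup 2 S :=
    IsPGroup.of_card (n := 3) (by rw [Nat.card_congr φ.toEquiv, DihedralGroup.nat_card]; rfl)
  have hNS : normalizer (S : Set G) ≤ normalizer (E : Set G) :=
    normalizer_le_normalizer_of_forall_not_isConj hES hE.exponent_two h1
  refine hpS.exists_sylow_eq_of_normalizer_eq ?_
  rwa [inf_eq_left.mpr hNS] at h2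
end

section
/- Let G be a group and D a conjugacy class of involutions in G such that the product of any two elements of D has order at most 6. If t ∈ D and r ∈ G satisfy t·r·t = r⁻¹, then r² has order at most 6; in particular, the order of r is at most 12. -/
/-! If `t ∈ D` inverts `r`, then `r t r⁻¹ ∈ D` and `t · (r t r⁻¹) = r⁻²`; so the order bound
for products of two elements of `D` bounds the order of `r²` by 6, hence that of `r` by 12. -/

lemma mul_conj_eq_inv_sq_of_mul_mul_eq_inv {G : Type*} [Group G] {t r : G}
    (htr : t * r * t = r⁻¹) : t * (r * t * r⁻¹) = (r ^ 2)⁻¹ := by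
  calc t * (r * t * r⁻¹) = t * r * t * r⁻¹ := by group
    _ = (r ^ 2)⁻¹ := by rw [htr]; group

lemma orderOf_le_mul_orderOf_pow {M : Type*} [Monoid M] {x : M} {n : ℕ} (hn : 0 < n)
    (hpos : 0 < orderOf (x ^ n)) : 0 < orderOf x ∧ orderOf x ≤ n * orderOf (x ^ n) := by
  have hx : x ^ (n * orderOf (x ^ n)) = 1 := by rw [pow_mul, pow_orderOf_eq_one]
  refine ⟨(orderOf_pos_iff.mp hpos).of_pow hn.ne' |>.orderOf_pos, ?_⟩
  exact orderOf_le_of_pow_eq_one (Nat.mul_pos hn hpos) hx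

theorem stmt_15_general {G : Type*} [Group G] (D : Set G)
    (hDcc : ∃ g : G, D = {x : G | IsConj g x})
    (h6 : ∀ d₁ ∈ D, ∀ d₂ ∈ D, 0 < orderOf (d₁ * d₂) ∧ orderOf (d₁ * d₂) ≤ 6)
    (t : G) (ht : t ∈ D) (r : G) (htr : t * r * t = r⁻¹) :
    0 < orderOf (r ^ 2) ∧ orderOf (r ^ 2) ≤ 6 ∧
      0 < orderOf r ∧ orderOf r ≤ 12 := by
  obtain ⟨g, rfl⟩ := hDcc
  have hconj : r * t * r⁻¹ ∈ {x : G | IsConj g x} := ht.trans (isConj_iff.mpr ⟨r, rfl⟩)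
  obtain ⟨hpos, hle⟩ := h6 t ht _ hconj
  rw [mul_conj_eq_inv_sq_of_mul_mul_eq_inv htr, orderOf_inv] at hpos hle
  obtain ⟨hrpos, hrle⟩ := orderOf_le_mul_orderOf_pow two_pos hpos
  exact ⟨hpos, hle, hrpos, by omega⟩

/-- If `D` is a class of 6-transpositions, `t ∈ D` and `t·r·t = r⁻¹`, then `r²` has order
at most 6 and `r` has order at most 12. -/
theorem stmt_15 {G : Type*} [Group G] (D : Set G)
    (hDcc : ∃ g : G, D = {x : G | IsConj g x})
    (hDinv : ∀ d ∈ D, orderOf d = 2)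
    (h6 : ∀ d₁ ∈ D, ∀ d₂ ∈ D, 0 < orderOf (d₁ * d₂) ∧ orderOf (d₁ * d₂) ≤ 6)
    (t : G) (ht : t ∈ D) (r : G) (htr : t * r * t = r⁻¹) :
    0 < orderOf (r ^ 2) ∧ orderOf (r ^ 2) ≤ 6 ∧
      0 < orderOf r ∧ orderOf r ≤ 12 :=
  stmt_15_general D hDcc h6 t ht r htr
end
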